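/- Let η₀ > 0 and let f, g : Ω_{η₀} → 𝒜 be continuously differentiable monogenic functions such that f + g·e₃ = 0 identically on Ω_{η₀} (right multiplication by e₃). Then f and g are monogenic constants, i.e. ∂f = 0 and ∂g = 0 on Ω_{η₀}. -/

import Mathlib

open MeasureTheory Filter Quaternion

noncomputable section

namespace Toro

/-- Points of ℝ³. -/
notation "ℝ³" => (Fin 3 → ℝ)

/-- The quaternion unit e₁. -/
def e1 : ℍ[ℝ] := ⟨0, 1, 0, 0⟩
/-- The quaternion unit e₂. -/
def e2 : ℍ[ℝ] := ⟨0, 0, 1, 0⟩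
/-- The quaternion unit e₃. -/
def e3 : ℍ[ℝ] := ⟨0, 0, 0, 1⟩

/-- Partial derivative ∂ᵢ via the Fréchet derivative. -/
def pdf {E : Type*} [NormedAddCommGroup E] [NormedSpace ℝ E]
    (i : Fin 3) (f : ℝ³ → E) (x : ℝ³) : E :=
  fderiv ℝ f x (Pi.single i 1)

/-- `HasPartialAt i h x v` : `h` has `i`-th partial derivative `v` at `x`. -/
def HasPartialAt (i : Fin 3) (h : ℝ³ → ℝ) (x : ℝ³) (v : ℝ) : Prop :=
  HasDerivAt (fun t => h (Function.update x i t)) v (x i)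

/-- The generalized Cauchy-Riemann (Fueter) operator ∂̄f = ∂₀f + e₁∂₁f + e₂∂₂f. -/
def CRbar (f : ℝ³ → ℍ[ℝ]) (x : ℝ³) : ℍ[ℝ] :=
  pdf 0 f x + e1 * pdf 1 f x + e2 * pdf 2 f x

/-- The conjugate Cauchy-Riemann operator ∂f = ∂₀f − e₁∂₁f − e₂∂₂f. -/
def CRconj (f : ℝ³ → ℍ[ℝ]) (x : ℝ³) : ℍ[ℝ] :=
  pdf 0 f x - e1 * pdf 1 f x - e2 * pdf 2 f x

/-- ∂h = ∂₀h − ∂₁h e₁ − ∂₂h e₂ for a real-valued h. -/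
def gradQ (h : ℝ³ → ℝ) (x : ℝ³) : ℍ[ℝ] :=
  ⟨pdf 0 h x, -(pdf 1 h x), -(pdf 2 h x), 0⟩

/-- The point of ℝ³ with toroidal coordinates (η, θ, φ). -/
def torusCoords (η θ φ : ℝ) : ℝ³ :=
  ![Real.sin θ / (Real.cosh η - Real.cos θ),
    Real.sinh η * Real.cos φ / (Real.cosh η - Real.cos θ),
    Real.sinh η * Real.sin φ / (Real.cosh η - Real.cos θ)]

/-- The solid torus Ω_{η₀} : points with toroidal coordinate η > η₀, together with
the core circle {x₀ = 0, x₁² + x₂² = 1}. -/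
def torusDomain (η₀ : ℝ) : Set ℝ³ :=
  {x | ∃ η θ φ : ℝ, η₀ < η ∧ x = torusCoords η θ φ} ∪
    {x | x 0 = 0 ∧ (x 1) ^ 2 + (x 2) ^ 2 = 1}

/-- The set V = {x : x₁² + x₂² > 0} ∖ {x₀ = 0, x₁² + x₂² = 1}. -/
def Vset : Set ℝ³ :=
  {x | 0 < (x 1) ^ 2 + (x 2) ^ 2} \ {x | x 0 = 0 ∧ (x 1) ^ 2 + (x 2) ^ 2 = 1}

/-- ρ = √(x₁² + x₂²). -/
def rhoOf (x : ℝ³) : ℝ := Real.sqrt ((x 1) ^ 2 + (x 2) ^ 2)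

/-- Square of the distance from (ρ, x₀) to (−1, 0) in the meridian half-plane. -/
def d1sq (x : ℝ³) : ℝ := (rhoOf x + 1) ^ 2 + (x 0) ^ 2
/-- Square of the distance from (ρ, x₀) to (1, 0) in the meridian half-plane. -/
def d2sq (x : ℝ³) : ℝ := (rhoOf x - 1) ^ 2 + (x 0) ^ 2

/-- cosh η, where η is the toroidal coordinate of x. -/
def coshEta (x : ℝ³) : ℝ :=
  (d1sq x + d2sq x) / (2 * Real.sqrt (d1sq x) * Real.sqrt (d2sq x))

/-- The toroidal coordinate θ ∈ [−π, π] of x (sign matching the sign of x₀). -/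
def thetaOf (x : ℝ³) : ℝ :=
  (if x 0 < 0 then -1 else 1) *
    Real.arccos ((d1sq x + d2sq x - 4) / (2 * Real.sqrt (d1sq x) * Real.sqrt (d2sq x)))

/-- The toroidal coordinate φ ∈ (−π, π] of x. -/
def phiOf (x : ℝ³) : ℝ := Complex.arg ⟨x 1, x 2⟩

/-- Φ_k^+(α) = cos kα (sign `true`), Φ_k^−(α) = sin kα (sign `false`). -/
def Phi (s : Bool) (k : ℕ) (α : ℝ) : ℝ :=
  if s then Real.cos (k * α) else Real.sin (k * α)

/-- Associated Legendre function of the second kind, real degree ν, integer order m. -/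
def legendreQ (ν : ℝ) (m : ℕ) (t : ℝ) : ℝ :=
  ((-1 : ℝ) ^ m / (2 : ℝ) ^ (ν + 1)) * (Real.Gamma (ν + m + 1) / Real.Gamma (ν + 1)) *
    (t ^ 2 - 1) ^ ((m : ℝ) / 2) *
    ∫ s in (-1 : ℝ)..1, (1 - s ^ 2) ^ ν * (t - s) ^ (-(ν + m + 1))

/-- The interior toroidal harmonic I_{n,m}^{ν,μ}. -/
def torI (n m : ℕ) (ν μ : Bool) (x : ℝ³) : ℝ :=
  Real.sqrt (coshEta x - Real.cos (thetaOf x)) *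
    legendreQ ((n : ℝ) - 1 / 2) m (coshEta x) * Phi ν n (thetaOf x) * Phi μ m (phiOf x)

/-- J_m^+(x) = Re((x₁ + i x₂)^m). -/
def Jp (m : ℤ) (x : ℝ³) : ℝ := ((⟨x 1, x 2⟩ : ℂ) ^ m).re
/-- J_m^−(x) = Im((x₁ + i x₂)^m). -/
def Jm (m : ℤ) (x : ℝ³) : ℝ := ((⟨x 1, x 2⟩ : ℂ) ^ m).im
/-- Ĵ(x) = −log |x₁ + i x₂|. -/
def Jhat (x : ℝ³) : ℝ := -Real.log (‖(⟨x 1, x 2⟩ : ℂ)‖)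

/-- The basic monogenic constant W_m^+ = J_m^+ e₁ − J_m^− e₂. -/
def Wp (m : ℤ) (x : ℝ³) : ℍ[ℝ] := ⟨0, Jp m x, -(Jm m x), 0⟩
/-- The basic monogenic constant W_m^− = J_m^− e₁ + J_m^+ e₂. -/
def Wn (m : ℤ) (x : ℝ³) : ℍ[ℝ] := ⟨0, Jm m x, Jp m x, 0⟩

/-- The 1-form ω_f associated to an 𝒜-valued f. -/
def omegaF (f : ℝ³ → ℍ[ℝ]) (x v : ℝ³) : ℝ :=
  (f x).re * v 0 - (f x).imI * v 1 - (f x).imJ * v 2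

/-- The unit circle γ(t) = (0, cos t, sin t). -/
def circ (t : ℝ) : ℝ³ := ![0, Real.cos t, Real.sin t]

/-- The cohomology coefficient coh f = (1/2π) ∫ ω_f along the unit circle. -/
def cohOp (f : ℝ³ → ℍ[ℝ]) : ℝ :=
  (1 / (2 * Real.pi)) * ∫ t in (0 : ℝ)..(2 * Real.pi), omegaF f (circ t) (deriv circ t)

/-- The coefficients κ^n_{k,m}. -/
def kap (n k m : ℕ) : ℝ :=
  if n = 0 then
    (if k = 1 then (if m = 0 then -(1 / 2 : ℝ) else (2 * (m : ℝ) - 1) / 2) else 0)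
  else if k + 1 = n then -((2 * (n : ℝ) + 2 * (m : ℝ) - 1) / 4)
  else if k = n then (n : ℝ)
  else if k = n + 1 then -((2 * (n : ℝ) - 2 * (m : ℝ) + 1) / 4)
  else 0

/-- The change-of-basis coefficients i*^n_{k,m}. -/
def istar : ℕ → ℕ → ℕ → ℝ
  | 0, k, _ => if k = 0 then 1 else 0
  | (n + 1), k, m =>
    if k = n + 1 then 1
    else (1 / kap n (n + 1) m) * ∑ j ∈ Finset.Icc (k - 1) n, kap j k m * istar n j m

/-- The inverse change-of-basis coefficients i^n_{k,m} (arguments: n, m, k). -/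
def icoef (n m k : ℕ) : ℝ :=
  if k = n then 1
  else if k < n then
    -∑ j ∈ (Finset.Icc (k + 1) n).attach, istar j.1 k m * icoef n m j.1
  else 0
termination_by n - k
decreasing_by
  have hj := j.2
  simp only [Finset.mem_Icc] at hj
  omega

/-- The reverse-Appell toroidal harmonic I*_{n,m}^{ν,μ}. -/
def IstarH (n m : ℕ) (ν μ : Bool) (x : ℝ³) : ℝ :=
  ∑ k ∈ Finset.range (n + 1), istar n k m * torI k m ν μ x

/-- The exact basic toroidal monogenic T_{n,m}^{ν,μ} = ∂I*_{n−1,m}^{−ν,μ} (for n ≥ 1). -/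
def Tmono (n m : ℕ) (ν μ : Bool) (x : ℝ³) : ℍ[ℝ] :=
  gradQ (IstarH (n - 1) m (!ν) μ) x

/-- The annulus D = {z : sinh η₀/(cosh η₀ + 1) < |z| < sinh η₀/(cosh η₀ − 1)}. -/
def annulusD (η₀ : ℝ) : Set ℂ :=
  {z | Real.sinh η₀ / (Real.cosh η₀ + 1) < ‖z‖ ∧
       ‖z‖ < Real.sinh η₀ / (Real.cosh η₀ - 1)}

/-- The Teodorescu operator 𝒯_D g (w) = −(1/π) ∬_D g(z)/(z−w) dA(z). -/
def teodorescu (D : Set ℂ) (g : ℂ → ℂ) (w : ℂ) : ℂ :=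
  -(1 / (Real.pi : ℂ)) * ∫ z in D, g z / (z - w)

/-- The operator Ψ producing an 𝒜-valued monogenic function with scalar part h. -/
def PsiOp (η₀ : ℝ) (h : ℝ³ → ℝ) (x : ℝ³) : ℍ[ℝ] :=
  ⟨h x,
   -(∫ t in (0 : ℝ)..(x 0), pdf 1 h ![t, x 1, x 2]) +
     (1 / 2) * (teodorescu (annulusD η₀) (fun z => ((pdf 0 h ![0, z.re, z.im] : ℝ) : ℂ)) ⟨x 1, x 2⟩).re,
   -(∫ t in (0 : ℝ)..(x 0), pdf 2 h ![t, x 1, x 2]) -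
     (1 / 2) * (teodorescu (annulusD η₀) (fun z => ((pdf 0 h ![0, z.re, z.im] : ℝ) : ℂ)) ⟨x 1, x 2⟩).im,
   0⟩

/-- The basic toroidal monogenic of index n = 0 :
T_{0,m}^{+,μ} = Ψ[I_{0,m}^{+,μ}] − (coh Ψ[I_{0,m}^{+,μ}]) W_{−1}^−. -/
def T0mono (η₀ : ℝ) (m : ℕ) (μ : Bool) (x : ℝ³) : ℍ[ℝ] :=
  PsiOp η₀ (torI 0 m true μ) x - cohOp (PsiOp η₀ (torI 0 m true μ)) • Wn (-1) x

/-- Membership in M(𝒜): 𝒜-valued, monogenic, square-integrable on Ω_{η₀}. -/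
def MemMA (η₀ : ℝ) (f : ℝ³ → ℍ[ℝ]) : Prop :=
  (∀ x ∈ torusDomain η₀, DifferentiableAt ℝ f x) ∧
  (∀ x ∈ torusDomain η₀, (f x).imK = 0) ∧
  (∀ x ∈ torusDomain η₀, CRbar f x = 0) ∧
  IntegrableOn (fun x => ‖f x‖ ^ 2) (torusDomain η₀)

/-- Membership in M(ℍ): ℍ-valued, monogenic, square-integrable on Ω_{η₀}. -/
def MemMH (η₀ : ℝ) (f : ℝ³ → ℍ[ℝ]) : Prop :=
  (∀ x ∈ torusDomain η₀, DifferentiableAt ℝ f x) ∧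
  (∀ x ∈ torusDomain η₀, CRbar f x = 0) ∧
  IntegrableOn (fun x => ‖f x‖ ^ 2) (torusDomain η₀)

/-- The Laplacian Δh = ∂₀²h + ∂₁²h + ∂₂²h. -/
def laplacian (h : ℝ³ → ℝ) (x : ℝ³) : ℝ :=
  pdf 0 (pdf 0 h) x + pdf 1 (pdf 1 h) x + pdf 2 (pdf 2 h) x

/-- Membership in Har(Ω_{η₀}): real-valued, C², harmonic, square-integrable. -/
def MemHar (η₀ : ℝ) (h : ℝ³ → ℝ) : Prop :=
  (∀ x ∈ torusDomain η₀, ContDiffAt ℝ 2 h x) ∧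
  (∀ x ∈ torusDomain η₀, laplacian h x = 0) ∧
  IntegrableOn (fun x => (h x) ^ 2) (torusDomain η₀)

/-- The coefficients j_{n,m}^± (sign `s`, row `n`, integer `m`). -/
def jcoef (s : Bool) (n : ℕ) (m : ℤ) : ℝ :=
  if 0 ≤ m then
    (1 + if n = 0 then 1 else 0) * (-1 : ℝ) ^ m * Real.sqrt (2 / Real.pi) /
      Real.Gamma ((m : ℝ) + 1 / 2)
  else
    (if s then 1 else -1) * 2 * (-1 : ℝ) ^ m * Real.sqrt (2 / Real.pi) *
      (1 / Real.Gamma ((m : ℝ) + 1 / 2)) *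
      (Real.Gamma ((n : ℝ) + (m : ℝ) + 1 / 2) / Real.Gamma ((n : ℝ) - (m : ℝ) + 1 / 2))

end Toro

/-!
Since `e₁e₃ = -e₂` and `e₂e₃ = e₁`, the scalar and `e₃`-components of `f + g e₃` are `f₀ - g₃`
and `f₃ + g₀`, so `f` and `g` take values in `ℝe₁ + ℝe₂`. For such an `h = h₁e₁ + h₂e₂` the
`e₁`- and `e₂`-components of `∂̄h` are `∂₀h₁` and `∂₀h₂`, so a monogenic `h` has `∂₀h = 0`, and then
`∂h = 2∂₀h - ∂̄h = 0`. Differentiating the vanishing components needs `Ω_{η₀}` to be open: in the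
meridian half-plane `(ρ, x₀)` it is the set where the squared distances `d₁², d₂²` to the foci
`(∓1, 0)` satisfy `d₁² > e^{2η₀} d₂²`, which one sees by inverting bipolar coordinates
`ρ - x₀i = coth ((η + θi) / 2)`.
-/

open Topology

theorem ContinuousLinearMap.apply_fderiv_eq_zero_of_eventually {𝕜 E F G : Type*}
    [NontriviallyNormedField 𝕜] [NormedAddCommGroup E] [NormedSpace 𝕜 E]
    [NormedAddCommGroup F] [NormedSpace 𝕜 F] [NormedAddCommGroup G] [NormedSpace 𝕜 G]
    (L : F →L[𝕜] G) {f : E → F} {x : E} (hf : DifferentiableAt 𝕜 f x)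
    (h : ∀ᶠ y in 𝓝 x, L (f y) = 0) (v : E) : L (fderiv 𝕜 f x v) = 0 := by
  have hcomp : fderiv 𝕜 (L ∘ f) x = L.comp (fderiv 𝕜 f x) :=
    (L.hasFDerivAt.comp x hf.hasFDerivAt).fderiv
  have hzero : fderiv 𝕜 (L ∘ f) x = 0 := by
    rw [Function.comp_def, EventuallyEq.fderiv_eq (f := fun _ => (0 : G)) h, fderiv_const_apply]
  simpa using congrArg (fun M : E →L[𝕜] G => M v) (hcomp.symm.trans hzero)

open Complex in
theorem Complex.exp_sub_one_mul_sinh_sub_sin_mul_I (η θ : ℝ) :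
    (exp (η + θ * I) - 1) * (Real.sinh η - Real.sin θ * I) =
      (exp (η + θ * I) + 1) * (Real.cosh η - Real.cos θ) := by
  have hE : Real.exp η * Real.exp (-η) = 1 := by rw [← Real.exp_add]; simp
  apply Complex.ext
  · simp only [mul_re, mul_im, sub_re, sub_im, add_re, add_im, exp_re, exp_im, ofReal_re, ofReal_im,
      I_re, I_im, one_re, one_im, mul_zero, mul_one, sub_zero, add_zero, zero_add,
      Real.sinh_eq, Real.cosh_eq]
    linear_combination (-Real.cos θ) * hE + Real.exp η * Real.sin_sq_add_cos_sq θ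
  · simp only [mul_re, mul_im, sub_re, sub_im, add_re, add_im, exp_re, exp_im, ofReal_re, ofReal_im,
      I_re, I_im, one_re, one_im, mul_zero, mul_one, sub_zero, add_zero, zero_add,
      Real.sinh_eq, Real.cosh_eq]
    linear_combination (-Real.sin θ) * hE

theorem Real.cosh_sub_cos_pos {η : ℝ} (hη : η ≠ 0) (θ : ℝ) : 0 < Real.cosh η - Real.cos θ := by
  linarith [Real.one_lt_cosh.mpr hη, Real.cos_le_one θ]

open Complex in
theorem exists_bipolar_coords {r t : ℝ} (hr : 0 < r) (hrt : (r - 1) ^ 2 + t ^ 2 ≠ 0) :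
    ∃ η θ : ℝ, 0 < η ∧ r = Real.sinh η / (Real.cosh η - Real.cos θ) ∧
      t = Real.sin θ / (Real.cosh η - Real.cos θ) := by
  set w : ℂ := r - t * I
  have hnormSq_sub : Complex.normSq (w - 1) = (r - 1) ^ 2 + t ^ 2 := by
    simp [w, Complex.normSq_apply]; ring
  have hnormSq_add : Complex.normSq (w + 1) = (r + 1) ^ 2 + t ^ 2 := by
    simp [w, Complex.normSq_apply]; ring
  have hw_sub : w - 1 ≠ 0 := by
    rw [← Complex.normSq_pos, hnormSq_sub]; exact lt_of_le_of_ne (by positivity) hrt.symm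
  have hw_add : w + 1 ≠ 0 := by
    rw [← Complex.normSq_pos, hnormSq_add]; positivity
  -- `η + θ i = log u` with `u = (w + 1) / (w - 1)`, inverting `w = coth ((η + θ i) / 2)`
  set u := (w + 1) / (w - 1)
  have hu : u ≠ 0 := div_ne_zero hw_add hw_sub
  have hu_sub : u - 1 ≠ 0 := by
    rw [div_sub_one hw_sub]; exact div_ne_zero (by ring_nf; norm_num) hw_sub
  have hu_norm : 1 < ‖u‖ := by
    rw [norm_div, one_lt_div (norm_pos_iff.mpr hw_sub), ← sq_lt_sq₀ (norm_nonneg _)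
      (norm_nonneg _), ← Complex.normSq_eq_norm_sq, ← Complex.normSq_eq_norm_sq, hnormSq_sub,
      hnormSq_add]
    nlinarith
  set η := Real.log ‖u‖
  set θ := arg u
  have hη : 0 < η := Real.log_pos hu_norm
  have hexp : exp (η + θ * I) = u := by
    rw [← exp_log hu, ← re_add_im (log u), log_re, log_im]
  have hD := Real.cosh_sub_cos_pos hη.ne' θ
  have hwu : (u - 1) * w = u + 1 := by
    simp only [u]; field_simp; ring
  have hw : w * (Real.cosh η - Real.cos θ) = Real.sinh η - Real.sin θ * I := by
    apply mul_left_cancel₀ hu_sub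
    rw [← mul_assoc, hwu, ← hexp, exp_sub_one_mul_sinh_sub_sin_mul_I]
  have hre := congrArg Complex.re hw
  have him := congrArg Complex.im hw
  simp only [w, mul_re, mul_im, sub_re, sub_im, ofReal_re, ofReal_im, I_re, I_im] at hre him
  refine ⟨η, θ, hη, ?_, ?_⟩
  · rw [eq_div_iff hD.ne']; linear_combination hre
  · rw [eq_div_iff hD.ne']; linear_combination -him

namespace Toro

theorem torusCoords_zero (η θ φ : ℝ) :
    torusCoords η θ φ 0 = Real.sin θ / (Real.cosh η - Real.cos θ) := rfl
theorem torusCoords_one (η θ φ : ℝ) :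
    torusCoords η θ φ 1 = Real.sinh η * Real.cos φ / (Real.cosh η - Real.cos θ) := rfl
theorem torusCoords_two (η θ φ : ℝ) :
    torusCoords η θ φ 2 = Real.sinh η * Real.sin φ / (Real.cosh η - Real.cos θ) := rfl

theorem rhoOf_torusCoords {η : ℝ} (hη : 0 < η) (θ φ : ℝ) :
    rhoOf (torusCoords η θ φ) = Real.sinh η / (Real.cosh η - Real.cos θ) := by
  have hD := Real.cosh_sub_cos_pos hη.ne' θ
  have hsinh : 0 < Real.sinh η := Real.sinh_pos_iff.mpr hη
  rw [rhoOf, ← Real.sqrt_sq (by positivity : 0 ≤ Real.sinh η / (Real.cosh η - Real.cos θ))]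
  congr 1
  simp only [torusCoords_one, torusCoords_two]
  field_simp
  linear_combination Real.sin_sq_add_cos_sq φ

theorem d1sq_torusCoords {η : ℝ} (hη : 0 < η) (θ φ : ℝ) :
    d1sq (torusCoords η θ φ) = 2 * Real.exp η / (Real.cosh η - Real.cos θ) := by
  have hD := Real.cosh_sub_cos_pos hη.ne' θ
  have hE : Real.exp η * Real.exp (-η) = 1 := by rw [← Real.exp_add]; simp
  rw [d1sq, rhoOf_torusCoords hη, torusCoords_zero]
  field_simp
  rw [Real.cosh_eq, Real.sinh_eq]
  linear_combination -hE + Real.sin_sq_add_cos_sq θ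

theorem d2sq_torusCoords {η : ℝ} (hη : 0 < η) (θ φ : ℝ) :
    d2sq (torusCoords η θ φ) = 2 * Real.exp (-η) / (Real.cosh η - Real.cos θ) := by
  have hD := Real.cosh_sub_cos_pos hη.ne' θ
  have hE : Real.exp η * Real.exp (-η) = 1 := by rw [← Real.exp_add]; simp
  rw [d2sq, rhoOf_torusCoords hη, torusCoords_zero]
  field_simp
  rw [Real.cosh_eq, Real.sinh_eq]
  linear_combination -hE + Real.sin_sq_add_cos_sq θ

theorem exp_two_mul_mul_d2sq_torusCoords_lt_iff {η : ℝ} (hη : 0 < η) (η₀ θ φ : ℝ) :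
    Real.exp (2 * η₀) * d2sq (torusCoords η θ φ) < d1sq (torusCoords η θ φ) ↔ η₀ < η := by
  have hD := Real.cosh_sub_cos_pos hη.ne' θ
  rw [d1sq_torusCoords hη, d2sq_torusCoords hη, ← mul_div_assoc, div_lt_div_iff_of_pos_right hD,
    mul_left_comm, mul_lt_mul_iff_right₀ two_pos, ← Real.exp_add, Real.exp_lt_exp]
  constructor <;> intro h <;> linarith

theorem d1sq_sub_d2sq (x : ℝ³) : d1sq x - d2sq x = 4 * rhoOf x := by
  unfold d1sq d2sq; ring

theorem d2sq_eq_zero_iff {x : ℝ³} : d2sq x = 0 ↔ x 0 = 0 ∧ x 1 ^ 2 + x 2 ^ 2 = 1 := by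
  rw [d2sq, add_eq_zero_iff_of_nonneg (sq_nonneg _) (sq_nonneg _), sq_eq_zero_iff, sq_eq_zero_iff,
    sub_eq_zero, rhoOf, Real.sqrt_eq_one, and_comm]

theorem exists_torusCoords_eq {x : ℝ³} (hρ : 0 < rhoOf x) (hx : d2sq x ≠ 0) :
    ∃ η θ φ : ℝ, 0 < η ∧ x = torusCoords η θ φ := by
  obtain ⟨η, θ, hη, hρη, hx0⟩ := exists_bipolar_coords hρ hx
  have hnorm : ‖(⟨x 1, x 2⟩ : ℂ)‖ = rhoOf x := by
    rw [Complex.norm_def, Complex.normSq_apply, rhoOf]; ring_nf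
  refine ⟨η, θ, phiOf x, hη, ?_⟩
  ext i
  fin_cases i
  · exact hx0
  · simpa [torusCoords_one, phiOf, hnorm, hρη, mul_div_right_comm] using
      (Complex.norm_mul_cos_arg ⟨x 1, x 2⟩).symm
  · simpa [torusCoords_two, phiOf, hnorm, hρη, mul_div_right_comm] using
      (Complex.norm_mul_sin_arg ⟨x 1, x 2⟩).symm

theorem torusDomain_eq {η₀ : ℝ} (hη₀ : 0 < η₀) :
    torusDomain η₀ = {x | Real.exp (2 * η₀) * d2sq x < d1sq x} := by
  ext x
  constructor
  · rintro (⟨η, θ, φ, hη, rfl⟩ | hcore)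
    · exact (exp_two_mul_mul_d2sq_torusCoords_lt_iff (hη₀.trans hη) η₀ θ φ).mpr hη
    · have hρ : rhoOf x = 1 := by rw [rhoOf, hcore.2, Real.sqrt_one]
      have hd2 : d2sq x = 0 := d2sq_eq_zero_iff.mpr hcore
      have hd1 : d1sq x = 4 := by linarith [d1sq_sub_d2sq x]
      simp [hd1, hd2]
  · intro hx
    by_cases hd2 : d2sq x = 0
    · exact Or.inr (d2sq_eq_zero_iff.mp hd2)
    have hd2_pos : 0 < d2sq x := (by unfold d2sq; positivity : 0 ≤ d2sq x).lt_of_ne' hd2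
    have hρ : 0 < rhoOf x := by
      have : d2sq x < Real.exp (2 * η₀) * d2sq x :=
        lt_mul_of_one_lt_left hd2_pos (Real.one_lt_exp_iff.mpr (by positivity))
      linarith [d1sq_sub_d2sq x, hx.out]
    obtain ⟨η, θ, φ, hη, rfl⟩ := exists_torusCoords_eq hρ hd2
    exact Or.inl ⟨η, θ, φ, (exp_two_mul_mul_d2sq_torusCoords_lt_iff hη η₀ θ φ).mp hx, rfl⟩

theorem isOpen_torusDomain {η₀ : ℝ} (hη₀ : 0 < η₀) : IsOpen (torusDomain η₀) := by
  rw [torusDomain_eq hη₀]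
  unfold d1sq d2sq rhoOf
  exact isOpen_lt (by fun_prop) (by fun_prop)

theorem re_add_mul_e3 (a b : ℍ[ℝ]) : (a + b * e3).re = a.re - b.imK := by
  rw [Quaternion.re_add, Quaternion.re_mul]; simp [e3, sub_eq_add_neg]

theorem imK_add_mul_e3 (a b : ℍ[ℝ]) : (a + b * e3).imK = a.imK + b.re := by
  rw [Quaternion.imK_add, Quaternion.imK_mul]; simp [e3]

theorem CRconj_eq_two_mul_pdf_sub_CRbar (f : ℝ³ → ℍ[ℝ]) (x : ℝ³) :
    CRconj f x = 2 * pdf 0 f x - CRbar f x := by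
  rw [CRconj, CRbar, two_mul]; abel

theorem re_pdf_eq_zero {f : ℝ³ → ℍ[ℝ]} {x : ℝ³} (hf : DifferentiableAt ℝ f x)
    (hre : ∀ᶠ y in 𝓝 x, (f y).re = 0) (i : Fin 3) : (pdf i f x).re = 0 :=
  let L : ℍ[ℝ] →ₗ[ℝ] ℝ := QuaternionAlgebra.reₗ _ _ _
  L.toContinuousLinearMap.apply_fderiv_eq_zero_of_eventually hf hre _

theorem imK_pdf_eq_zero {f : ℝ³ → ℍ[ℝ]} {x : ℝ³} (hf : DifferentiableAt ℝ f x)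
    (himK : ∀ᶠ y in 𝓝 x, (f y).imK = 0) (i : Fin 3) : (pdf i f x).imK = 0 :=
  let L : ℍ[ℝ] →ₗ[ℝ] ℝ := QuaternionAlgebra.imKₗ _ _ _
  L.toContinuousLinearMap.apply_fderiv_eq_zero_of_eventually hf himK _

theorem pdf_zero_eq_zero_of_CRbar_eq_zero {f : ℝ³ → ℍ[ℝ]} {x : ℝ³}
    (hf : DifferentiableAt ℝ f x) (hre : ∀ᶠ y in 𝓝 x, (f y).re = 0)
    (himK : ∀ᶠ y in 𝓝 x, (f y).imK = 0) (hbar : CRbar f x = 0) : pdf 0 f x = 0 := by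
  have hI := congrArg QuaternionAlgebra.imI hbar
  have hJ := congrArg QuaternionAlgebra.imJ hbar
  simp only [CRbar, Quaternion.imI_add, Quaternion.imJ_add, Quaternion.imI_mul,
    Quaternion.imJ_mul, re_pdf_eq_zero hf hre, imK_pdf_eq_zero hf himK] at hI hJ
  ext
  · exact re_pdf_eq_zero hf hre 0
  · simpa [e1, e2] using hI
  · simpa [e1, e2] using hJ
  · exact imK_pdf_eq_zero hf himK 0

theorem CRconj_eq_zero_of_CRbar_eq_zero {s : Set ℝ³} (hs : IsOpen s) {f : ℝ³ → ℍ[ℝ]}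
    (hf : ∀ x ∈ s, DifferentiableAt ℝ f x) (hre : ∀ x ∈ s, (f x).re = 0)
    (himK : ∀ x ∈ s, (f x).imK = 0) (hbar : ∀ x ∈ s, CRbar f x = 0) :
    ∀ x ∈ s, CRconj f x = 0 := by
  intro x hx
  have hpdf := pdf_zero_eq_zero_of_CRbar_eq_zero (hf x hx)
    (eventually_of_mem (hs.mem_nhds hx) hre) (eventually_of_mem (hs.mem_nhds hx) himK) (hbar x hx)
  rw [CRconj_eq_two_mul_pdf_sub_CRbar, hpdf, hbar x hx, mul_zero, sub_zero]

/-- if f, g are 𝒜-valued monogenic functions on Ω_{η₀} with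
f + g·e₃ = 0, then f and g are monogenic constants. -/
theorem stmt_15 (η₀ : ℝ) (hη : 0 < η₀) (f g : ℝ³ → ℍ[ℝ])
    (hfC : ∀ x ∈ torusDomain η₀, ContDiffAt ℝ 1 f x)
    (hgC : ∀ x ∈ torusDomain η₀, ContDiffAt ℝ 1 g x)
    (hfA : ∀ x ∈ torusDomain η₀, (f x).imK = 0)
    (hgA : ∀ x ∈ torusDomain η₀, (g x).imK = 0)
    (hfm : ∀ x ∈ torusDomain η₀, CRbar f x = 0)
    (hgm : ∀ x ∈ torusDomain η₀, CRbar g x = 0)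
    (hzero : ∀ x ∈ torusDomain η₀, f x + g x * e3 = 0) :
    (∀ x ∈ torusDomain η₀, CRconj f x = 0) ∧
    (∀ x ∈ torusDomain η₀, CRconj g x = 0) := by
  have hfre : ∀ x ∈ torusDomain η₀, (f x).re = 0 := fun x hx => by
    simpa [hgA x hx] using (re_add_mul_e3 (f x) (g x)).symm.trans (congrArg _ (hzero x hx))
  have hgre : ∀ x ∈ torusDomain η₀, (g x).re = 0 := fun x hx => by
    simpa [hfA x hx] using (imK_add_mul_e3 (f x) (g x)).symm.trans (congrArg _ (hzero x hx))
  exact ⟨CRconj_eq_zero_of_CRbar_eq_zero (isOpen_torusDomain hη)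
      (fun x hx => (hfC x hx).differentiableAt one_ne_zero) hfre hfA hfm,
    CRconj_eq_zero_of_CRbar_eq_zero (isOpen_torusDomain hη)
      (fun x hx => (hgC x hx).differentiableAt one_ne_zero) hgre hgA hgm⟩

end Toro
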